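/- For any 2×2 complex matrix A, with D^ℝ(A) = (A + A*)/2 + i·A*A, the identity (U_{D^ℝ(A)})² - |D_{D^ℝ(A)}|² = 2(U_A - |D_A|)(U_A + |D_A|)(U_A - |D_A| + 2E_A) holds. -/

import Mathlib

/-!
Write `A = c + (u + i v) · σ` with `σ` the Pauli matrices and `u, v ∈ ℝ³`. Then `U_A = |u|² + |v|²`
and `D_A = -(u + i v) · (u + i v)`, so that `U_A² - |D_A|² = 4 |u × v|²` and
`U_A - |D_A| + 2 E_A = 2 |u|² + 2 (Im c)²`. The real double has Pauli vector `u + i k` with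
`k = 2 Re c · u + 2 Im c · v - 2 u × v`, and `|u × k|² = (4 (Im c)² + 4 |u|²) |u × v|²`.
-/

open Matrix

noncomputable def UA (A : Matrix (Fin 2) (Fin 2) ℂ) : ℝ :=
  (Matrix.trace (Aᴴ * A)).re / 2 - (‖Matrix.trace A‖) ^ 2 / 4

noncomputable def DA (A : Matrix (Fin 2) (Fin 2) ℂ) : ℂ :=
  A.det - (Matrix.trace A) ^ 2 / 4

noncomputable def EA (A : Matrix (Fin 2) (Fin 2) ℂ) : ℝ :=
  ((Matrix.trace A).im / 2) ^ 2 + (‖DA A‖ - (DA A).re) / 2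

/-- The real double of `A`. -/
noncomputable def realDouble (A : Matrix (Fin 2) (Fin 2) ℂ) : Matrix (Fin 2) (Fin 2) ℂ :=
  (2 : ℂ)⁻¹ • (A + Aᴴ) + Complex.I • (Aᴴ * A)

open Complex

theorem cross_smul_add_smul_sub_cross_dot_self {R : Type*} [CommRing R] (u v : Fin 3 → R)
    (a b : R) :
    u ⨯₃ (a • u + b • v - (2 : R) • u ⨯₃ v) ⬝ᵥ u ⨯₃ (a • u + b • v - (2 : R) • u ⨯₃ v) =
      (b ^ 2 + 4 * (u ⬝ᵥ u)) * (u ⨯₃ v ⬝ᵥ u ⨯₃ v) := by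
  simp only [cross_apply, vec3_dotProduct, Pi.add_apply, Pi.sub_apply, Pi.smul_apply, smul_eq_mul,
    cons_val]
  ring

/-- `c • 1 + ∑ i, (u i + v i * I) • σ i`, where `σ` are the Pauli matrices. -/
def pauliForm (c : ℂ) (u v : Fin 3 → ℝ) : Matrix (Fin 2) (Fin 2) ℂ :=
  !![c + ⟨u 2, v 2⟩, ⟨u 0 + v 1, v 0 - u 1⟩; ⟨u 0 - v 1, v 0 + u 1⟩, c - ⟨u 2, v 2⟩]

theorem exists_pauliForm_eq (A : Matrix (Fin 2) (Fin 2) ℂ) :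
    ∃ c u v, pauliForm c u v = A := by
  refine ⟨A.trace / 2, ![(A 0 1 + A 1 0).re / 2, (A 1 0 - A 0 1).im / 2, (A 0 0 - A 1 1).re / 2],
    ![(A 0 1 + A 1 0).im / 2, (A 0 1 - A 1 0).re / 2, (A 0 0 - A 1 1).im / 2], ?_⟩
  ext i j
  fin_cases i <;> fin_cases j <;> apply Complex.ext <;>
    simp only [pauliForm, trace_fin_two, Fin.isValue, Fin.zero_eta, Fin.mk_one, of_apply, cons_val',
      cons_val_zero, cons_val_one, cons_val_fin_one, cons_val, add_re, add_im, sub_re, sub_im,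
      div_ofNat_re, div_ofNat_im] <;>
    ring

theorem trace_pauliForm (c : ℂ) (u v : Fin 3 → ℝ) : (pauliForm c u v).trace = 2 * c := by
  rw [pauliForm, trace_fin_two]
  simp only [of_apply, cons_val', cons_val_zero, cons_val_one, cons_val_fin_one]
  ring

theorem UA_pauliForm (c : ℂ) (u v : Fin 3 → ℝ) : UA (pauliForm c u v) = u ⬝ᵥ u + v ⬝ᵥ v := by
  rw [UA, trace_pauliForm, Complex.sq_norm]
  simp only [pauliForm, trace_fin_two, mul_apply, Fin.sum_univ_two, conjTranspose_apply,
    of_apply, cons_val', cons_val_zero, cons_val_one, cons_val_fin_one, RCLike.star_def,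
    add_re, add_im, sub_re, sub_im, mul_re, mul_im, conj_re, conj_im, map_add, map_sub,
    normSq_apply, re_ofNat, im_ofNat, vec3_dotProduct]
  ring

theorem DA_pauliForm (c : ℂ) (u v : Fin 3 → ℝ) :
    DA (pauliForm c u v) = ⟨v ⬝ᵥ v - u ⬝ᵥ u, -2 * (u ⬝ᵥ v)⟩ := by
  rw [DA, trace_pauliForm]
  apply Complex.ext <;>
    simp only [pauliForm, det_fin_two, of_apply, cons_val', cons_val_zero, cons_val_one,
      cons_val_fin_one, pow_two, add_re, add_im, sub_re, sub_im, mul_re, mul_im, div_ofNat_re,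
      div_ofNat_im, re_ofNat, im_ofNat, vec3_dotProduct] <;>
    ring

/-- The Pauli algebra `(a · σ) (b · σ) = a · b + i (a × b) · σ` gives the Pauli vector of `Aᴴ A`. -/
theorem realDouble_pauliForm (c : ℂ) (u v : Fin 3 → ℝ) :
    realDouble (pauliForm c u v) =
      pauliForm ⟨c.re, normSq c + u ⬝ᵥ u + v ⬝ᵥ v⟩ u
        ((2 * c.re) • u + (2 * c.im) • v - (2 : ℝ) • u ⨯₃ v) := by
  ext i j
  fin_cases i <;> fin_cases j <;> apply Complex.ext <;>
    simp only [realDouble, pauliForm, Fin.isValue, Fin.zero_eta, Fin.mk_one, Matrix.add_apply,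
      Matrix.smul_apply, mul_apply, Fin.sum_univ_two, conjTranspose_apply, RCLike.star_def, map_add,
      map_sub, of_apply, cons_val', cons_val_zero, cons_val_one, cons_val_fin_one, cons_val,
      smul_eq_mul, add_re, add_im, sub_re, sub_im, mul_re, mul_im, conj_re, conj_im, inv_re, inv_im,
      re_ofNat, im_ofNat, normSq_ofNat, I_re, I_im, normSq_apply, vec3_dotProduct, cross_apply,
      Pi.add_apply, Pi.sub_apply, Pi.smul_apply] <;>
    ring

theorem UA_sq_sub_norm_DA_sq_pauliForm (c : ℂ) (u v : Fin 3 → ℝ) :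
    UA (pauliForm c u v) ^ 2 - ‖DA (pauliForm c u v)‖ ^ 2 = 4 * (u ⨯₃ v ⬝ᵥ u ⨯₃ v) := by
  rw [UA_pauliForm, DA_pauliForm, Complex.sq_norm, normSq_mk, cross_dot_cross, dotProduct_comm v u]
  ring

theorem UA_sub_norm_DA_add_two_EA_pauliForm (c : ℂ) (u v : Fin 3 → ℝ) :
    UA (pauliForm c u v) - ‖DA (pauliForm c u v)‖ + 2 * EA (pauliForm c u v) =
      2 * (u ⬝ᵥ u) + 2 * c.im ^ 2 := by
  rw [EA, UA_pauliForm, trace_pauliForm, DA_pauliForm, mul_im, re_ofNat, im_ofNat]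
  ring

theorem UA_DA_realDouble_identity (A : Matrix (Fin 2) (Fin 2) ℂ) :
    (UA (realDouble A)) ^ 2 - (‖DA (realDouble A)‖) ^ 2 =
      2 * (UA A - ‖DA A‖) * (UA A + ‖DA A‖)
        * (UA A - ‖DA A‖ + 2 * EA A) := by
  obtain ⟨c, u, v, rfl⟩ := exists_pauliForm_eq A
  calc UA (realDouble (pauliForm c u v)) ^ 2 - ‖DA (realDouble (pauliForm c u v))‖ ^ 2
      = 4 * (u ⨯₃ v ⬝ᵥ u ⨯₃ v) * (4 * (u ⬝ᵥ u) + 4 * c.im ^ 2) := by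
        rw [realDouble_pauliForm, UA_sq_sub_norm_DA_sq_pauliForm,
          cross_smul_add_smul_sub_cross_dot_self]
        ring
    _ = 2 * (UA (pauliForm c u v) ^ 2 - ‖DA (pauliForm c u v)‖ ^ 2) *
          (UA (pauliForm c u v) - ‖DA (pauliForm c u v)‖ + 2 * EA (pauliForm c u v)) := by
        rw [UA_sq_sub_norm_DA_sq_pauliForm, UA_sub_norm_DA_add_two_EA_pauliForm]
        ring
    _ = _ := by ring
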